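/- arXiv:1801.08972 — 3 statements merged into one kernel-verified Lean document; each statement's English description precedes it below -/
import Mathlib

section
/- No cograph has an adjacency eigenvalue strictly between -1 and 0: if G is a finite simple graph containing no induced path on four vertices, then every real eigenvalue λ of the adjacency matrix of G satisfies λ ≤ -1 or λ ≥ 0. -/
/-!
Fix `0 < t < 1`. For a nonempty cograph `G` the matrix `M = A(G) + t I` is nonsingular and
`1ᵀ M⁻¹ 1 > 1`; nonsingularity for all such `t` is the theorem. By Seinsche's theorem a cograph
on at least two vertices is disconnected or has a disconnected complement, so it suffices that
the property survives disjoint unions and complements. For a disjoint union `M` is block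
diagonal and `1ᵀ M⁻¹ 1` is additive. For the complement, `A(Gᶜ) + (1 - t) I = J - M`: if
`M y = 1` with `σ = 1ᵀ y > 1`, then `J - M` is nonsingular (its kernel lies in `ℝ y`, and
`(J - M) y = (σ - 1) 1`), and `1ᵀ (J - M)⁻¹ 1 = σ / (σ - 1) > 1`.
-/

open Polynomial

/-- The characteristic polynomial of the adjacency matrix of a finite simple graph. -/
noncomputable def graphCharpoly {V : Type} [Fintype V] (G : SimpleGraph V) : Polynomial ℝ :=
  letI := Classical.decEq V
  letI : DecidableRel G.Adj := Classical.decRel _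
  (SimpleGraph.adjMatrix ℝ G).charpoly

/-- The multiplicity `m(lam)` of `lam` as an eigenvalue of `G`, i.e. its multiplicity as a
root of the characteristic polynomial of the adjacency matrix of `G`. -/
noncomputable def eigMult {V : Type} [Fintype V] (G : SimpleGraph V) (lam : ℝ) : ℕ :=
  (graphCharpoly G).rootMultiplicity lam

/-- The energy of a graph: the sum of the absolute values of the eigenvalues of its
adjacency matrix, counted with multiplicity. -/
noncomputable def graphEnergy {V : Type} [Fintype V] (G : SimpleGraph V) : ℝ :=
  ((graphCharpoly G).roots.map (fun x => |x|)).sum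

namespace Matrix
variable {m n : Type*} [Fintype m] [Fintype n]

lemma not_isRoot_charpoly_neg [DecidableEq n] {A : Matrix n n ℝ} {t : ℝ}
    (hker : ∀ x, (A + t • 1) *ᵥ x = 0 → x = 0) : ¬A.charpoly.IsRoot (-t) := by
  intro hroot
  have hdet := hroot.eq_zero
  rw [eval_charpoly] at hdet
  obtain ⟨v, hv0, hv⟩ := exists_mulVec_eq_zero_iff.mpr hdet
  have hA : A + t • 1 = -(scalar n (-t) - A) := by
    rw [scalar_apply, ← smul_one_eq_diagonal]
    module
  exact hv0 (hker v (by rw [hA, neg_mulVec, hv, neg_zero]))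

/-- `M` is nonsingular and `1ᵀ M⁻¹ 1 > 1`, with `y = M⁻¹ 1` given as a solution of `M y = 1`. -/
def OneLtInvForm (M : Matrix n n ℝ) : Prop :=
  (∀ x, M *ᵥ x = 0 → x = 0) ∧ ∃ y, M *ᵥ y = 1 ∧ 1 < ∑ i, y i

lemma oneLtInvForm_smul_one [Unique n] [DecidableEq n] {t : ℝ} (ht0 : 0 < t) (ht1 : t < 1) :
    (t • 1 : Matrix n n ℝ).OneLtInvForm := by
  refine ⟨fun x hx => ?_, fun _ => t⁻¹, ?_, ?_⟩
  · rw [smul_mulVec, one_mulVec] at hx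
    exact (smul_eq_zero.mp hx).resolve_left ht0.ne'
  · rw [smul_mulVec, one_mulVec]
    ext
    simp [ht0.ne']
  · rw [Fintype.sum_unique]
    exact one_lt_inv_iff₀.mpr ⟨ht0, ht1⟩

lemma OneLtInvForm.submatrix_equiv {M : Matrix n n ℝ} (h : M.OneLtInvForm) (e : m ≃ n) :
    (M.submatrix e e).OneLtInvForm := by
  obtain ⟨hker, y, hy, hsum⟩ := h
  refine ⟨fun x hx => ?_, y ∘ e, ?_, by simpa only [Function.comp_apply, e.sum_comp] using hsum⟩
  · rw [submatrix_mulVec_equiv] at hx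
    have hx' := hker _ (funext fun i => by simpa using congrFun hx (e.symm i))
    exact funext fun j => by simpa using congrFun hx' (e j)
  · rw [submatrix_mulVec_equiv, Function.comp_assoc, e.self_comp_symm, Function.comp_id, hy]
    rfl

lemma OneLtInvForm.fromBlocks_zero {A : Matrix m m ℝ} {D : Matrix n n ℝ} (hA : A.OneLtInvForm)
    (hD : D.OneLtInvForm) : (fromBlocks A 0 0 D).OneLtInvForm := by
  obtain ⟨hkerA, yA, hyA, hsumA⟩ := hA
  obtain ⟨hkerD, yD, hyD, hsumD⟩ := hD
  refine ⟨fun x hx => ?_, Sum.elim yA yD, ?_, ?_⟩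
  · simp only [fromBlocks_mulVec, zero_mulVec, add_zero, zero_add] at hx
    have hxA := hkerA _ (funext fun i => congrFun hx (.inl i))
    have hxD := hkerD _ (funext fun i => congrFun hx (.inr i))
    ext (i | i)
    · exact congrFun hxA i
    · exact congrFun hxD i
  · ext (i | i) <;> simp [fromBlocks_mulVec, hyA, hyD]
  · rw [Fintype.sum_sum_type]
    simp only [Sum.elim_inl, Sum.elim_inr]
    linarith

lemma of_one_mulVec (x : n → ℝ) : (of 1 : Matrix n n ℝ) *ᵥ x = fun _ => ∑ i, x i := by
  ext; simp [mulVec, dotProduct]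

lemma OneLtInvForm.of_one_sub {M : Matrix n n ℝ} (h : M.OneLtInvForm) :
    (of 1 - M).OneLtInvForm := by
  obtain ⟨hker, y, hy, hsum⟩ := h
  refine ⟨fun x hx => ?_, (∑ i, y i - 1)⁻¹ • y, ?_, ?_⟩
  · rw [sub_mulVec, sub_eq_zero, of_one_mulVec] at hx
    have hxy : x = (∑ i, x i) • y := by
      refine sub_eq_zero.mp (hker _ ?_)
      rw [mulVec_sub, mulVec_smul, hy, ← hx]
      ext; simp
    have : ∑ i, x i = 0 := by
      have : ∑ i, x i = (∑ i, x i) * ∑ i, y i := by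
        conv_lhs => rw [hxy]
        simp [Finset.mul_sum]
      nlinarith
    rw [hxy, this, zero_smul]
  · rw [sub_mulVec, mulVec_smul, mulVec_smul, hy, of_one_mulVec]
    ext
    simp only [Pi.sub_apply, Pi.smul_apply, smul_eq_mul, Pi.one_apply]
    rw [← mul_sub]
    exact inv_mul_cancel₀ (by linarith)
  · simp only [Pi.smul_apply, smul_eq_mul, ← Finset.mul_sum]
    rw [inv_mul_eq_div, lt_div_iff₀ (by linarith)]
    linarith

end Matrix

open Matrix

namespace SimpleGraph
variable {V : Type*} {G : SimpleGraph V}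

lemma pathGraph_four_isIndContained_compl : pathGraph 4 ⊴ (pathGraph 4)ᶜ := by
  have h : ∀ i j : Fin 4, (pathGraph 4)ᶜ.Adj (![1, 3, 0, 2] i) (![1, 3, 0, 2] j) ↔
      (pathGraph 4).Adj i j := by
    simp only [compl_adj, pathGraph_adj]; decide
  exact ⟨⟨⟨![1, 3, 0, 2], by decide⟩, h _ _⟩⟩

lemma pathGraph_four_eq_of_forall_adj_iff :
    ∀ i j : Fin 4, (∀ k, (pathGraph 4).Adj i k ↔ (pathGraph 4).Adj j k) → i = j := by
  simp only [pathGraph_adj]; decide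

lemma isIndContained_pathGraph_four_of_adj {a b c d : V} (hab : G.Adj a b) (hbc : G.Adj b c)
    (hcd : G.Adj c d) (hac : ¬G.Adj a c) (hbd : ¬G.Adj b d) (had : ¬G.Adj a d) :
    pathGraph 4 ⊴ G := by
  set f : Fin 4 → V := ![a, b, c, d]
  have hf : ∀ i j, G.Adj (f i) (f j) ↔ (pathGraph 4).Adj i j := by
    have hca : ¬G.Adj c a := fun h => hac h.symm
    have hdb : ¬G.Adj d b := fun h => hbd h.symm
    have hda : ¬G.Adj d a := fun h => had h.symm
    intro i j
    fin_cases i <;> fin_cases j <;>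
      simp [f, pathGraph_adj, hab, hbc, hcd, hac, hbd, had, hab.symm, hbc.symm, hcd.symm,
        hca, hdb, hda]
  refine ⟨⟨⟨f, fun i j hij => pathGraph_four_eq_of_forall_adj_iff i j fun k => ?_⟩, hf _ _⟩⟩
  rw [← hf, ← hf, hij]

def IsCograph (G : SimpleGraph V) : Prop := ¬pathGraph 4 ⊴ G

lemma IsCograph.induce (hG : G.IsCograph) (s : Set V) : (G.induce s).IsCograph :=
  fun h => hG (h.trans ⟨Embedding.induce s⟩)

lemma IsCograph.compl (hG : G.IsCograph) : Gᶜ.IsCograph := fun h =>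
  hG (pathGraph_four_isIndContained_compl.trans (by simpa using h.compl))

lemma compl_induce (s : Set V) : (G.induce s)ᶜ = Gᶜ.induce s := by
  ext x y
  simp [Subtype.ext_iff]

lemma Preconnected.exists_reachable_induce_compl_singleton_adj
    (hG : G.Preconnected) {v : V} (w : ({v}ᶜ : Set V)) :
    ∃ a, (G.induce {v}ᶜ).Reachable w a ∧ G.Adj v a := by
  by_contra! hno
  obtain ⟨p⟩ := hG w v
  obtain ⟨d, -, ⟨_, hr⟩, hy⟩ := p.exists_boundary_dart
    {x | ∃ hx : x ≠ v, (G.induce {v}ᶜ).Reachable w ⟨x, hx⟩} ⟨w.2, .rfl⟩ fun ⟨h, _⟩ => h rfl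
  by_cases hyv : d.snd = v
  · exact hno _ hr (hyv ▸ d.adj).symm
  · exact hy ⟨hyv, hr.trans (Adj.reachable (induce_adj.mpr d.adj))⟩

/-- Every component of `G - v` contains a neighbour of `v`. In the component of the non-neighbour
`u` some edge `b a` has `a ~ v ≁ b`; with a neighbour `c` of `v` in another component, `b a v c`
is an induced path. -/
lemma isIndContained_pathGraph_four_of_not_preconnected_induce (hG : G.Preconnected)
    {u v : V} (huv : u ≠ v) (hvu : ¬G.Adj v u) (hH : ¬(G.induce {v}ᶜ).Preconnected) :
    pathGraph 4 ⊴ G := by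
  set H := G.induce {v}ᶜ
  have nbr := hG.exists_reachable_induce_compl_singleton_adj (v := v)
  obtain ⟨a, hua, hva⟩ := nbr ⟨u, huv⟩
  obtain ⟨p⟩ := hua.symm
  -- every vertex of `p` is reachable from `a`, so the dart found leaves the neighbourhood of `v`
  obtain ⟨d, -, hd, hd'⟩ := p.exists_boundary_dart {x | H.Reachable a x → G.Adj v x}
    (fun _ => hva) (by simpa using ⟨hua.symm, hvu⟩)
  obtain ⟨hab, hvb⟩ := Classical.not_imp.mp hd'
  have haa' : H.Reachable a d.fst := hab.trans d.adj.symm.reachable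
  have hva' := hd haa'
  obtain ⟨c, hc, hvc⟩ : ∃ c, ¬H.Reachable a c ∧ G.Adj v c := by
    simp only [Preconnected, not_forall] at hH
    obtain ⟨q, r, hqr⟩ := hH
    obtain ⟨x, hx⟩ : ∃ x, ¬H.Reachable a x := by
      by_contra! h
      exact hqr ((h q).symm.trans (h r))
    obtain ⟨c, hxc, hvc⟩ := nbr x
    exact ⟨c, fun h => hx (h.trans hxc.symm), hvc⟩
  exact isIndContained_pathGraph_four_of_adj (a := d.snd.1) (b := d.fst.1) (c := v) (d := c.1)
    d.adj.symm hva'.symm hvc (fun h => hvb h.symm)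
    (fun h => hc (haa'.trans (Adj.reachable (induce_adj.mpr h))))
    (fun h => hc (hab.trans (Adj.reachable (induce_adj.mpr h))))

theorem IsCograph.subsingleton_of_preconnected [Finite V] (hG : G.IsCograph)
    (hpre : G.Preconnected) (hpre' : Gᶜ.Preconnected) : Subsingleton V := by
  induction V using Finite.induction_subsingleton_or_nontrivial with
  | hbase => infer_instance
  | hstep V ih =>
    exfalso
    obtain ⟨v⟩ := ‹Nontrivial V›.to_nonempty
    obtain ⟨u, hvu⟩ := hpre.exists_adj_of_nontrivial v
    obtain ⟨w, hvw⟩ := hpre'.exists_adj_of_nontrivial v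
    rw [compl_adj] at hvw
    by_cases hH : (G.induce {v}ᶜ).Preconnected
    · by_cases hHc : (Gᶜ.induce {v}ᶜ).Preconnected
      · have := ih _ (Finite.card_subtype_lt (x := v) (by simp)) (hG.induce _) hH
          (by rwa [compl_induce])
        have huw : u = w := congrArg Subtype.val
          (Subsingleton.elim (⟨u, hvu.ne'⟩ : ({v}ᶜ : Set V)) ⟨w, hvw.1.symm⟩)
        exact hvw.2 (huw ▸ hvu)
      · exact hG.compl (isIndContained_pathGraph_four_of_not_preconnected_induce
          hpre' hvu.ne' (fun h => h.2 hvu) hHc)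
    · exact hG (isIndContained_pathGraph_four_of_not_preconnected_induce hpre hvw.1.symm hvw.2 hH)

lemma adjMatrix_compl_add_smul_one [DecidableEq V] [DecidableRel G.Adj] (t : ℝ) :
    Gᶜ.adjMatrix ℝ + (1 - t) • 1 = of 1 - (G.adjMatrix ℝ + t • 1) := by
  classical
  rw [← one_add_adjMatrix_add_compl_adjMatrix_eq_of_one (α := ℝ) (G := G),
    compl_adjMatrix_eq_adjMatrix_compl]
  module

lemma submatrix_sumCompl_adjMatrix_add_smul_one [DecidableEq V] [DecidableRel G.Adj] (S : Set V)
    [DecidablePred (· ∈ S)] (hS : ∀ a ∈ S, ∀ b ∉ S, ¬G.Adj a b) (t : ℝ) :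
    (G.adjMatrix ℝ + t • 1).submatrix (Equiv.Set.sumCompl S) (Equiv.Set.sumCompl S) =
      fromBlocks ((G.induce S).adjMatrix ℝ + t • 1) 0 0 ((G.induce Sᶜ).adjMatrix ℝ + t • 1) := by
  ext (i | i) (j | j)
  · simp [one_apply, Subtype.ext_iff]
  · have hij : (i : V) ≠ j := fun h => j.2 (h ▸ i.2)
    simp [hS _ i.2 _ j.2, hij]
  · have hij : (i : V) ≠ j := fun h => i.2 (h ▸ j.2)
    have hadj : ¬G.Adj i j := fun h => hS _ j.2 _ i.2 h.symm
    simp [hadj, hij]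
  · simp [one_apply, Subtype.ext_iff]

lemma exists_set_forall_not_adj_of_not_preconnected (h : ¬G.Preconnected) :
    ∃ S : Set V, S.Nonempty ∧ Sᶜ.Nonempty ∧ ∀ a ∈ S, ∀ b ∉ S, ¬G.Adj a b := by
  simp only [Preconnected, not_forall] at h
  obtain ⟨u, w, huw⟩ := h
  exact ⟨{x | G.Reachable u x}, ⟨u, .rfl⟩, ⟨w, huw⟩,
    fun a ha b hb hab => hb (ha.trans hab.reachable)⟩

lemma oneLtInvForm_adjMatrix_add_smul_one_of_forall_not_adj [Fintype V] [DecidableEq V]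
    [DecidableRel G.Adj] (S : Set V) [DecidablePred (· ∈ S)] (hS : ∀ a ∈ S, ∀ b ∉ S, ¬G.Adj a b)
    {t : ℝ} (hin : ((G.induce S).adjMatrix ℝ + t • 1).OneLtInvForm)
    (hout : ((G.induce Sᶜ).adjMatrix ℝ + t • 1).OneLtInvForm) :
    (G.adjMatrix ℝ + t • 1).OneLtInvForm := by
  have := (hin.fromBlocks_zero hout).submatrix_equiv (Equiv.Set.sumCompl S).symm
  rwa [← submatrix_sumCompl_adjMatrix_add_smul_one S hS, submatrix_submatrix,
    Equiv.self_comp_symm, submatrix_id_id] at this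

theorem IsCograph.oneLtInvForm_adjMatrix_add_smul_one [Fintype V] [Nonempty V] [DecidableEq V]
    [DecidableRel G.Adj] (hG : G.IsCograph) {t : ℝ} (ht0 : 0 < t) (ht1 : t < 1) :
    (G.adjMatrix ℝ + t • 1).OneLtInvForm := by
  obtain ⟨n, hn⟩ : ∃ n, Fintype.card V = n := ⟨_, rfl⟩
  induction n using Nat.strong_induction_on generalizing V t with
  | _ n ih =>
  rcases subsingleton_or_nontrivial V with hV | hV
  · have : Unique V := _root_.uniqueOfSubsingleton (Classical.arbitrary V)
    have hA : G.adjMatrix ℝ = 0 := by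
      ext i j
      simp [Subsingleton.elim i j]
    rw [hA, zero_add]
    exact oneLtInvForm_smul_one ht0 ht1
  · have hdisconnected : ∀ (H : SimpleGraph V) [DecidableRel H.Adj], H.IsCograph →
        ¬H.Preconnected → ∀ s : ℝ, 0 < s → s < 1 → (H.adjMatrix ℝ + s • 1).OneLtInvForm := by
      intro H _ hH hpre s hs0 hs1
      obtain ⟨S, ⟨a, ha⟩, ⟨b, hb⟩, hS⟩ := exists_set_forall_not_adj_of_not_preconnected hpre
      classical
      have : Nonempty S := ⟨⟨a, ha⟩⟩
      have : Nonempty ↥Sᶜ := ⟨⟨b, hb⟩⟩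
      exact oneLtInvForm_adjMatrix_add_smul_one_of_forall_not_adj S hS
        (ih _ (hn ▸ Fintype.card_subtype_lt (x := b) hb) (hH.induce S) hs0 hs1 rfl)
        (ih _ (hn ▸ Fintype.card_subtype_lt (x := a) (by simpa using ha)) (hH.induce Sᶜ) hs0 hs1
          rfl)
    have hG' : ¬G.Preconnected ∨ ¬Gᶜ.Preconnected := not_and_or.mp fun h =>
      not_subsingleton V (hG.subsingleton_of_preconnected h.1 h.2)
    rcases hG' with h | h
    · exact hdisconnected G hG h t ht0 ht1
    · have := (hdisconnected Gᶜ hG.compl h (1 - t) (by linarith) (by linarith)).of_one_sub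
      rwa [adjMatrix_compl_add_smul_one, sub_sub_cancel] at this

end SimpleGraph

/-- **No cograph has an eigenvalue strictly between `-1` and `0`.**
If a finite simple graph `G` contains no induced path on four vertices (no graph embedding
of the path graph `P₄` into `G`), then every real eigenvalue `lam` of its adjacency matrix
satisfies `lam ≤ -1` or `0 ≤ lam`. -/
theorem cograph_no_eigenvalue_in_open_interval {V : Type} [Fintype V] (G : SimpleGraph V)
    (hcograph : IsEmpty (SimpleGraph.pathGraph 4 ↪g G)) :
    ∀ lam : ℝ, (graphCharpoly G).IsRoot lam → lam ≤ -1 ∨ 0 ≤ lam := by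
  intro lam hroot
  by_contra! hlam
  classical
  rcases isEmpty_or_nonempty V with hV | hV
  · simp [graphCharpoly, charpoly_isEmpty] at hroot
  · have hG : G.IsCograph := not_nonempty_iff.mpr hcograph
    refine not_isRoot_charpoly_neg (t := -lam)
      (hG.oneLtInvForm_adjMatrix_add_smul_one (by linarith) (by linarith)).1 ?_
    rw [neg_neg]
    exact hroot
end

section
/- Let r ≥ 2 be an odd integer and let G be the cograph with regular balanced cotree T_G(a_1,…,a_{r−1},0 | 0,…,0,b_r), on n = a_1 a_2 ⋯ a_{r−1} b_r vertices. Then for every real number λ with λ ≠ −1 and λ ≠ b_r − 1, the multiplicity of λ as an eigenvalue of G satisfies m(λ) ≤ a_1 a_2 ⋯ a_{r−2}. -/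
open Polynomial

/-- The vertex type of the cograph with regular balanced cotree: iterated copies. -/
def copiesVertex : List ℕ → ℕ → Type
  | [], b => Fin b
  | a :: rest, b => Fin a × copiesVertex rest b

instance copiesVertexFintype : ∀ (l : List ℕ) (b : ℕ), Fintype (copiesVertex l b)
  | [], b => inferInstanceAs (Fintype (Fin b))
  | a :: rest, b =>
      haveI := copiesVertexFintype rest b
      inferInstanceAs (Fintype (Fin a × copiesVertex rest b))

/-- `m` pairwise disjoint copies of `H`, with all edges between distinct copies added when
`j = true` (join), and no edges between copies when `j = false` (disjoint union). -/
def levelGraph {V : Type} (m : ℕ) (H : SimpleGraph V) (j : Bool) : SimpleGraph (Fin m × V) where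
  Adj x y := (x.1 = y.1 ∧ H.Adj x.2 y.2) ∨ (x.1 ≠ y.1 ∧ j = true)
  symm := by
    constructor
    rintro ⟨i, x⟩ ⟨k, y⟩ (⟨h1, h2⟩ | ⟨h1, h2⟩)
    · exact Or.inl ⟨h1.symm, H.adj_symm h2⟩
    · exact Or.inr ⟨fun h => h1 h.symm, h2⟩
  loopless := by
    constructor
    rintro ⟨i, x⟩ (⟨_, h⟩ | ⟨h, _⟩)
    · exact H.irrefl h
    · exact h rfl

/-- The complete graph on `b` vertices if `j = true`, the edgeless graph otherwise. -/
def baseGraph (b : ℕ) (j : Bool) : SimpleGraph (Fin b) := if j then ⊤ else ⊥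

/-- The cograph `H_0` with regular balanced cotree `T_G(a_1, …, a_{r-1}, 0 | 0, …, 0, b)`,
where `l = [a_1, …, a_{r-1}]`; the top level is a join when `j = true`.  (So the graph `G`
of the paper is `cotreeGraph [a_1, …, a_{r-1}] b_r true`: the levels alternate join/union
starting with a join at depth 0, and the deepest level is a clique `K_{b_r}` exactly when
`r` is odd.) -/
def cotreeGraph : ∀ (l : List ℕ) (b : ℕ) (j : Bool), SimpleGraph (copiesVertex l b)
  | [], b, j => baseGraph b j
  | a :: rest, b, j => levelGraph a (cotreeGraph rest b (!j)) j

/-!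
Since `r` is odd, the level of `a_{r-1}` is a disjoint union, so `G` is the lexicographic
product `Γ[a_{r-1} K_b]` of a cograph `Γ` on `a_1 ⋯ a_{r-2}` vertices with disjoint cliques.
With `E` the adjacency matrix of `Γ` and `J` all-ones matrices, the adjacency matrix `A` of `G`
satisfies `A + I = (E ⊗ J + I) ⊗ J`. Since `P Q` and `Q P` have the same nonzero eigenvalues
with multiplicities, `λ + 1 ≠ 0` has the same multiplicity in `A + I` as in `b (E ⊗ J + I)`,
and then `λ + 1 - b ≠ 0` has the same multiplicity in `b E ⊗ J` as in `a_{r-1} b E`, a matrix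
of size `a_1 ⋯ a_{r-2}`.
-/

open Matrix
open scoped Kronecker

namespace Matrix

variable {R : Type*} [CommRing R] {m n ι κ : Type*} [Fintype m] [Fintype n]
  [DecidableEq m] [DecidableEq n]

theorem rootMultiplicity_charpoly_add_scalar (M : Matrix n n R) (c μ : R) :
    (M + scalar n c).charpoly.rootMultiplicity (μ + c) = M.charpoly.rootMultiplicity μ := by
  have h := charpoly_sub_scalar (M + scalar n c) c
  rw [add_sub_cancel_right] at h
  simpa [h] using
    (rootMultiplicity_comp_C_mul_X_add_C (M + scalar n c).charpoly 1 c μ isUnit_one).symm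

variable [IsDomain R]

theorem rootMultiplicity_charpoly_le_card (M : Matrix n n R) (μ : R) :
    M.charpoly.rootMultiplicity μ ≤ Fintype.card n := by
  classical
  calc M.charpoly.rootMultiplicity μ = M.charpoly.roots.count μ := (count_roots _).symm
    _ ≤ Multiset.card M.charpoly.roots := Multiset.count_le_card _ _
    _ ≤ M.charpoly.natDegree := card_roots' _
    _ = Fintype.card n := charpoly_natDegree_eq_dim M

theorem rootMultiplicity_charpoly_mul_comm (A : Matrix m n R) (B : Matrix n m R) {μ : R}
    (hμ : μ ≠ 0) :
    (A * B).charpoly.rootMultiplicity μ = (B * A).charpoly.rootMultiplicity μ := by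
  have hX : ∀ k : ℕ, (X ^ k : R[X]).rootMultiplicity μ = 0 := fun k =>
    rootMultiplicity_eq_zero (by simpa using pow_ne_zero k hμ)
  have h := congrArg (rootMultiplicity μ) (charpoly_mul_comm' A B)
  rwa [rootMultiplicity_mul ((monic_X_pow _).mul (charpoly_monic _)).ne_zero,
    rootMultiplicity_mul ((monic_X_pow _).mul (charpoly_monic _)).ne_zero, hX, hX,
    zero_add, zero_add] at h

theorem rootMultiplicity_charpoly_kronecker_ones [Fintype ι] [Fintype κ] [DecidableEq ι]
    [DecidableEq κ] (B : Matrix ι ι R) {μ : R} (hμ : μ ≠ 0) :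
    (B ⊗ₖ (of fun _ _ => 1 : Matrix κ κ R)).charpoly.rootMultiplicity μ
      = ((Fintype.card κ : R) • B).charpoly.rootMultiplicity μ := by
  let P : Matrix (ι × κ) ι R := of fun p i => B p.1 i
  let Q : Matrix ι (ι × κ) R := of fun i q => if i = q.1 then 1 else 0
  have hPQ : P * Q = B ⊗ₖ (of fun _ _ => 1 : Matrix κ κ R) := by
    ext p q
    simp [P, Q, mul_apply]
  have hQP : Q * P = (Fintype.card κ : R) • B := by
    ext i i'
    simp [P, Q, mul_apply, Fintype.sum_prod_type]
  rw [← hPQ, ← hQP, rootMultiplicity_charpoly_mul_comm P Q hμ]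

end Matrix

namespace SimpleGraph

variable {U V W : Type}

def lexProd (G : SimpleGraph U) (H : SimpleGraph V) : SimpleGraph (U × V) where
  Adj x y := G.Adj x.1 y.1 ∨ (x.1 = y.1 ∧ H.Adj x.2 y.2)
  symm := by
    constructor
    rintro x y (h | ⟨h₁, h₂⟩)
    exacts [Or.inl h.symm, Or.inr ⟨h₁.symm, h₂.symm⟩]
  loopless := by
    constructor
    rintro x (h | ⟨-, h⟩)
    exacts [G.irrefl h, H.irrefl h]

@[simp]
theorem lexProd_adj {G : SimpleGraph U} {H : SimpleGraph V} {x y : U × V} :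
    (G.lexProd H).Adj x y ↔ G.Adj x.1 y.1 ∨ (x.1 = y.1 ∧ H.Adj x.2 y.2) :=
  Iff.rfl

def lexProdAssoc (G : SimpleGraph U) (H : SimpleGraph V) (K : SimpleGraph W) :
    (G.lexProd H).lexProd K ≃g G.lexProd (H.lexProd K) where
  toEquiv := Equiv.prodAssoc U V W
  map_rel_iff' := by
    rintro ⟨⟨u, v⟩, w⟩ ⟨⟨u', v'⟩, w'⟩
    simp only [Equiv.prodAssoc_apply, lexProd_adj, Prod.mk.injEq]
    tauto

def Iso.lexProdCongrRight (G : SimpleGraph U) {H : SimpleGraph V} {H' : SimpleGraph W}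
    (f : H ≃g H') : G.lexProd H ≃g G.lexProd H' where
  toEquiv := (Equiv.refl U).prodCongr f.toEquiv
  map_rel_iff' := by
    rintro ⟨u, v⟩ ⟨u', v'⟩
    simp [f.map_adj_iff]

def uniqueLexProd [Unique U] (G : SimpleGraph U) (H : SimpleGraph V) : G.lexProd H ≃g H where
  toEquiv := Equiv.uniqueProd V U
  map_rel_iff' := by
    rintro ⟨u, v⟩ ⟨u', v'⟩
    simp [Subsingleton.elim u u']

theorem Iso.eigMult_eq [Fintype U] [Fintype V] {G : SimpleGraph U} {H : SimpleGraph V}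
    (f : G ≃g H) (μ : ℝ) : eigMult G μ = eigMult H μ := by
  classical
  unfold eigMult graphCharpoly
  rw [← f.reindex_adjMatrix (α := ℝ), charpoly_reindex]

end SimpleGraph

open SimpleGraph

theorem graphCharpoly_eq_charpoly_adjMatrix {V : Type} [Fintype V] [DecidableEq V]
    (G : SimpleGraph V) [DecidableRel G.Adj] : graphCharpoly G = (G.adjMatrix ℝ).charpoly := by
  unfold graphCharpoly
  congr!

theorem levelGraph_eq_lexProd {V : Type} (m : ℕ) (H : SimpleGraph V) (j : Bool) :
    levelGraph m H j = (baseGraph m j).lexProd H := by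
  ext x y
  cases j <;> simp [levelGraph, baseGraph, and_comm, or_comm]

theorem card_copiesVertex :
    ∀ (l : List ℕ) (b : ℕ), Fintype.card (copiesVertex l b) = l.prod * b
  | [], b => by
      change Fintype.card (Fin b) = _
      simp
  | a :: rest, b => by
      change Fintype.card (Fin a × copiesVertex rest b) = _
      rw [Fintype.card_prod, Fintype.card_fin, card_copiesVertex rest b, List.prod_cons,
        mul_assoc]

def cotreeGraphAppendIso (m b : ℕ) :
    ∀ (l : List ℕ) (j : Bool), j = decide (Odd l.length) →
      cotreeGraph (l ++ [m]) b j ≃g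
        (cotreeGraph l 1 j).lexProd (levelGraph m (⊤ : SimpleGraph (Fin b)) false)
  | [], j, hj => by
      subst hj
      exact (@uniqueLexProd _ _ (inferInstanceAs (Unique (Fin 1))) _ _).symm
  | a :: l, j, hj => by
      have ih := cotreeGraphAppendIso m b l (!j)
        (by simp [hj, Nat.odd_add_one, -Nat.not_odd_iff_even])
      change levelGraph a _ j ≃g (levelGraph a _ j).lexProd _
      rw [levelGraph_eq_lexProd, levelGraph_eq_lexProd]
      exact (ih.lexProdCongrRight _).trans (lexProdAssoc _ _ _).symm

theorem adjMatrix_lexProd_disjointCliques_add_one {W : Type} [Fintype W] [DecidableEq W]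
    (Γ : SimpleGraph W) [DecidableRel Γ.Adj] (m b : ℕ)
    [DecidableRel (Γ.lexProd (levelGraph m (⊤ : SimpleGraph (Fin b)) false)).Adj] :
    ((Γ.lexProd (levelGraph m (⊤ : SimpleGraph (Fin b)) false)).adjMatrix ℝ).reindex
        (Equiv.prodAssoc W (Fin m) (Fin b)).symm (Equiv.prodAssoc W (Fin m) (Fin b)).symm + 1
      = (Γ.adjMatrix ℝ ⊗ₖ (of fun _ _ => 1 : Matrix (Fin m) (Fin m) ℝ) + 1)
          ⊗ₖ (of fun _ _ => 1 : Matrix (Fin b) (Fin b) ℝ) := by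
  ext ⟨⟨w, i⟩, x⟩ ⟨⟨w', i'⟩, x'⟩
  simp only [Matrix.add_apply, reindex_apply, submatrix_apply, adjMatrix_apply]
  by_cases hw : w = w'
  · subst hw
    by_cases hi : i = i'
    · subst hi
      by_cases hx : x = x' <;> simp [one_apply, levelGraph, hx]
    · simp [one_apply, levelGraph, hi]
  · by_cases hΓ : Γ.Adj w w' <;> simp [one_apply, hw, hΓ]

theorem eigMult_lexProd_disjointCliques_le {W : Type} [Fintype W] (Γ : SimpleGraph W)
    (m b : ℕ) {μ : ℝ} (hμ₁ : μ ≠ -1) (hμ₂ : μ ≠ b - 1) :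
    eigMult (Γ.lexProd (levelGraph m (⊤ : SimpleGraph (Fin b)) false)) μ
      ≤ Fintype.card W := by
  classical
  set J : (n : ℕ) → Matrix (Fin n) (Fin n) ℝ := fun n => of fun _ _ => 1
  set A := (Γ.lexProd (levelGraph m (⊤ : SimpleGraph (Fin b)) false)).adjMatrix ℝ
  set e := (Equiv.prodAssoc W (Fin m) (Fin b)).symm
  have hμ₁' : μ + 1 ≠ 0 := fun h => hμ₁ (eq_neg_of_add_eq_zero_left h)
  have hμ₂' : μ + 1 - b ≠ 0 := fun h => hμ₂ (by linarith)
  have hscale : (b : ℝ) • (Γ.adjMatrix ℝ ⊗ₖ J m + 1)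
      = ((b : ℝ) • Γ.adjMatrix ℝ) ⊗ₖ J m + scalar _ (b : ℝ) := by
    rw [smul_add, smul_kronecker, smul_one_eq_diagonal]
    rfl
  calc eigMult (Γ.lexProd (levelGraph m ⊤ false)) μ
      = (A.reindex e e + scalar _ 1).charpoly.rootMultiplicity (μ + 1) := by
        rw [eigMult, graphCharpoly_eq_charpoly_adjMatrix, rootMultiplicity_charpoly_add_scalar,
          charpoly_reindex]
    _ = ((b : ℝ) • (Γ.adjMatrix ℝ ⊗ₖ J m + 1)).charpoly.rootMultiplicity (μ + 1) := by
        rw [scalar_apply, diagonal_one, adjMatrix_lexProd_disjointCliques_add_one,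
          rootMultiplicity_charpoly_kronecker_ones _ hμ₁', Fintype.card_fin]
    _ = (((b : ℝ) • Γ.adjMatrix ℝ) ⊗ₖ J m).charpoly.rootMultiplicity (μ + 1 - b) := by
        rw [hscale, ← sub_add_cancel (μ + 1) (b : ℝ), rootMultiplicity_charpoly_add_scalar,
          add_sub_cancel_right]
    _ = (((m : ℝ) * b) • Γ.adjMatrix ℝ).charpoly.rootMultiplicity (μ + 1 - b) := by
        rw [rootMultiplicity_charpoly_kronecker_ones _ hμ₂', Fintype.card_fin, mul_smul]
    _ ≤ Fintype.card W := rootMultiplicity_charpoly_le_card _ _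

theorem multiplicity_bound_odd_regular_balanced_cotree_general
    (r : ℕ) (hodd : Odd r)
    (as : List ℕ) (al : ℕ) (hlen : (as ++ [al]).length = r - 1)
    (b : ℕ) :
    ∀ lam : ℝ, lam ≠ -1 → lam ≠ (b : ℝ) - 1 →
      eigMult (cotreeGraph (as ++ [al]) b true) lam ≤ as.prod := by
  intro lam h1 h2
  have hparity : true = decide (Odd as.length) := by
    obtain ⟨k, rfl⟩ := hodd
    simp only [List.length_append, List.length_singleton] at hlen
    simpa using ⟨k - 1, by omega⟩
  rw [(cotreeGraphAppendIso al b as true hparity).eigMult_eq, ← mul_one as.prod,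
    ← card_copiesVertex]
  exact eigMult_lexProd_disjointCliques_le _ al b h1 h2

/-- Let `r ≥ 2` be odd and let `G` be the cograph with regular balanced cotree
`T_G(a_1, …, a_{r-1}, 0 | 0, …, 0, b)`, where `[a_1, …, a_{r-1}] = as ++ [al]` are positive
and `b ≥ 2`.  Then for every real `lam` with `lam ≠ -1` and `lam ≠ b - 1`, the multiplicity
of `lam` as an eigenvalue of `G` satisfies `m(lam) ≤ a_1 a_2 ⋯ a_{r-2}` (an empty product
being `1`). -/
theorem multiplicity_bound_odd_regular_balanced_cotree
    (r : ℕ) (hr : 2 ≤ r) (hodd : Odd r)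
    (as : List ℕ) (al : ℕ) (hlen : (as ++ [al]).length = r - 1)
    (hpos : ∀ a ∈ as ++ [al], 0 < a)
    (b : ℕ) (hb : 2 ≤ b) :
    ∀ lam : ℝ, lam ≠ -1 → lam ≠ (b : ℝ) - 1 →
      eigMult (cotreeGraph (as ++ [al]) b true) lam ≤ as.prod :=
  multiplicity_bound_odd_regular_balanced_cotree_general r hodd as al hlen b
end

section
/- Let r ≥ 2 be an odd integer and let G be the cograph with non-regular balanced cotree T_G(a_1,…,a_{r−1},0 | b_1,…,b_r), where b_i = 0 for every even index i with 1 ≤ i ≤ r−1 and b_i ≥ b_r for every odd index i with 1 ≤ i ≤ r−1. Then b_r − 1 is an eigenvalue of G with multiplicity m(b_r − 1) = a_1 a_2 ⋯ a_{r−2} (a_{r−1} − 1). -/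
open Polynomial

/-- Vertex type for a non-regular balanced cotree: at each level, `p.1` copies of the
next level plus `p.2` extra leaf vertices. -/
def nrVertex : List (ℕ × ℕ) → ℕ → Type
  | [], b => Fin b
  | p :: rest, b => (Fin p.1 × nrVertex rest b) ⊕ Fin p.2

instance nrVertexFintype : ∀ (l : List (ℕ × ℕ)) (b : ℕ), Fintype (nrVertex l b)
  | [], b => inferInstanceAs (Fintype (Fin b))
  | p :: rest, b =>
      haveI := nrVertexFintype rest b
      inferInstanceAs (Fintype ((Fin p.1 × nrVertex rest b) ⊕ Fin p.2))

/-- One level of a non-regular balanced cotree: `a` pairwise disjoint copies of `H` together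
with `bb` additional single vertices; all edges between distinct parts are added when
`j = true` (join), and none when `j = false` (disjoint union). -/
def nrLevel {V : Type} (a bb : ℕ) (H : SimpleGraph V) (j : Bool) :
    SimpleGraph ((Fin a × V) ⊕ Fin bb) where
  Adj x y := match x, y with
    | Sum.inl x, Sum.inl y => (x.1 = y.1 ∧ H.Adj x.2 y.2) ∨ (x.1 ≠ y.1 ∧ j = true)
    | Sum.inl _, Sum.inr _ => j = true
    | Sum.inr _, Sum.inl _ => j = true
    | Sum.inr i, Sum.inr k => i ≠ k ∧ j = true
  symm := by
    constructor
    rintro (⟨i, x⟩ | i) (⟨k, y⟩ | k) h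
    · rcases h with ⟨h1, h2⟩ | ⟨h1, h2⟩
      · exact Or.inl ⟨h1.symm, H.adj_symm h2⟩
      · exact Or.inr ⟨fun h => h1 h.symm, h2⟩
    · exact h
    · exact h
    · exact ⟨fun h' => h.1 h'.symm, h.2⟩
  loopless := by
    constructor
    rintro (⟨i, x⟩ | i) h
    · rcases h with ⟨_, h⟩ | ⟨h, _⟩
      · exact H.loopless.irrefl x h
      · exact h rfl
    · exact h.1 rfl

/-- The cograph `H_0` with balanced cotree `T_G(a_1, …, a_{r-1}, 0 | b_1, …, b_{r-1}, b_r)`,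
where `l = [(a_1, b_1), …, (a_{r-1}, b_{r-1})]` and `b = b_r`; the top level is a join when
`j = true`, and levels alternate join/union. -/
def nrCotreeGraph : ∀ (l : List (ℕ × ℕ)) (b : ℕ) (j : Bool), SimpleGraph (nrVertex l b)
  | [], b, j => baseGraph b j
  | p :: rest, b, j => nrLevel p.1 p.2 (nrCotreeGraph rest b (!j)) j

/-!
Write `μ = b - 1` and call `(x, t)` a shifted solution on a graph if `A x + t 𝟙 = μ x`.
On every level `H_i` of the cotree, all shifted solutions satisfy `t = κ_i ∑ x` for a constant
`κ_i ∈ (-1, 0]`. On `K_b` one has `κ = 0`, since there `b x_w = ∑ x + t` for every vertex `w`.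
A disjoint union of `a` copies divides `κ` by `a`. In a join, each copy of `H` in a solution is
itself a shifted solution on `H`, shifted by the sum of the rest. Hence every copy sums to
`(∑ x + t) / (1 + κ)` and every extra vertex equals `(∑ x + t) / (μ + 1)`, so the new constant
is `ρ⁻¹ - 1 < 0` with `ρ = a / (1 + κ) + bb / (μ + 1) > 1`.

At a join level `κ ≠ 0`, so taking `t = 0` shows that the `μ`-eigenvectors have zero sum. The
space of zero-sum `μ`-eigenvectors then multiplies by `a_i` at each level, copy by copy. The
dimension starts at `a_{r-1} - 1` for `a_{r-1}` disjoint copies of `K_b`, where the eigenvectors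
are exactly the functions that are constant on each copy. The adjacency matrix is symmetric, so
the algebraic multiplicity equals this geometric one.
-/

open Matrix Module Module.End Set

theorem Matrix.IsHermitian.rootMultiplicity_charpoly_eq_finrank_eigenspace {n : Type*}
    [Fintype n] [DecidableEq n] {A : Matrix n n ℝ} (hA : A.IsHermitian) (μ : ℝ) :
    A.charpoly.rootMultiplicity μ = finrank ℝ (eigenspace (toLin' A) μ) := by
  have hT : (toEuclideanLin A).IsSymmetric := isSymmetric_toEuclideanLin_iff.mpr hA
  let e : eigenspace (toEuclideanLin A) μ ≃ₗ[ℝ] eigenspace (toLin' A) μ :=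
    (WithLp.linearEquiv 2 ℝ (n → ℝ)).ofSubmodules _ _ (by ext x; simp [← WithLp.toLp_smul])
  rw [← e.finrank_eq, ← hT.isFinitelySemisimple.maxGenEigenspace_eq_eigenspace,
    LinearMap.finrank_maxGenEigenspace_eq, toEuclideanLin_eq_toLin_orthonormal, charpoly_toLin]

section ShiftRatio

variable {V : Type} [Fintype V]

open scoped Classical in
noncomputable def adjLin (G : SimpleGraph V) : End ℝ (V → ℝ) :=
  toLin' (G.adjMatrix ℝ)

open scoped Classical in
lemma adjLin_apply (G : SimpleGraph V) (x : V → ℝ) (v : V) :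
    adjLin G x v = ∑ u, if G.Adj v u then x u else 0 := by
  simp [adjLin, mulVec, dotProduct]

lemma eigMult_eq_finrank_eigenspace (G : SimpleGraph V) (μ : ℝ) :
    eigMult G μ = finrank ℝ (eigenspace (adjLin G) μ) := by
  classical
  unfold eigMult graphCharpoly adjLin
  convert (G.isHermitian_adjMatrix ℝ).rootMultiplicity_charpoly_eq_finrank_eigenspace μ

def HasShiftRatio (G : SimpleGraph V) (μ κ : ℝ) : Prop :=
  ∀ (x : V → ℝ) (t : ℝ), (∀ v, adjLin G x v + t = μ * x v) → t = κ * ∑ v, x v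

noncomputable def zeroSumEigenspace (G : SimpleGraph V) (μ : ℝ) : Submodule ℝ (V → ℝ) :=
  eigenspace (adjLin G) μ ⊓ LinearMap.ker (Fintype.linearCombination ℝ fun _ : V ↦ (1 : ℝ))

lemma mem_zeroSumEigenspace {G : SimpleGraph V} {μ : ℝ} {x : V → ℝ} :
    x ∈ zeroSumEigenspace G μ ↔ (∀ v, adjLin G x v = μ * x v) ∧ ∑ v, x v = 0 := by
  simp [zeroSumEigenspace, funext_iff, Fintype.linearCombination_apply]

lemma HasShiftRatio.eigenspace_eq_zeroSumEigenspace {G : SimpleGraph V} {μ κ : ℝ}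
    (hG : HasShiftRatio G μ κ) (hκ : κ ≠ 0) :
    eigenspace (adjLin G) μ = zeroSumEigenspace G μ := by
  ext x
  rw [mem_zeroSumEigenspace, mem_eigenspace_iff, funext_iff]
  refine ⟨fun hx ↦ ⟨fun v ↦ hx v, ?_⟩, fun hx v ↦ hx.1 v⟩
  have := hG x 0 fun v ↦ by simpa using hx v
  exact (mul_eq_zero.mp this.symm).resolve_left hκ

end ShiftRatio

section Levels

open scoped Classical

variable {a bb : ℕ} {V : Type} (H : SimpleGraph V)

@[simp] lemma nrLevel_adj_inl_inl {j : Bool} {c c' : Fin a} {w w' : V} :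
    (nrLevel a bb H j).Adj (.inl (c, w)) (.inl (c', w')) ↔
      c = c' ∧ H.Adj w w' ∨ c ≠ c' ∧ j :=
  Iff.rfl

@[simp] lemma nrLevel_adj_inl_inr {j : Bool} {c : Fin a} {w : V} {i : Fin bb} :
    (nrLevel a bb H j).Adj (.inl (c, w)) (.inr i) ↔ j :=
  Iff.rfl

@[simp] lemma nrLevel_adj_inr_inl {j : Bool} {c : Fin a} {w : V} {i : Fin bb} :
    (nrLevel a bb H j).Adj (.inr i) (.inl (c, w)) ↔ j :=
  Iff.rfl

@[simp] lemma nrLevel_adj_inr_inr {j : Bool} {i k : Fin bb} :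
    (nrLevel a bb H j).Adj (.inr i) (.inr k) ↔ i ≠ k ∧ j :=
  Iff.rfl

def block (x : (Fin a × V) ⊕ Fin bb → ℝ) (c : Fin a) : V → ℝ := fun w ↦ x (.inl (c, w))

variable [Fintype V]

lemma sum_eq_sum_block_add (x : (Fin a × V) ⊕ Fin bb → ℝ) :
    ∑ v, x v = ∑ c, ∑ w, block x c w + ∑ i, x (.inr i) := by
  rw [Fintype.sum_sum_type, Fintype.sum_prod_type]
  rfl

lemma adjLin_nrLevel_false_inl (x : (Fin a × V) ⊕ Fin bb → ℝ) (c : Fin a) (w : V) :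
    adjLin (nrLevel a bb H false) x (.inl (c, w)) = adjLin H (block x c) w := by
  rw [adjLin_apply, Fintype.sum_sum_type, Fintype.sum_prod_type, Fintype.sum_eq_single c]
  · simp [block, adjLin_apply]
  · intro c' hc'
    simp [Ne.symm hc']

lemma adjLin_nrLevel_true_inl (x : (Fin a × V) ⊕ Fin bb → ℝ) (c : Fin a) (w : V) :
    adjLin (nrLevel a bb H true) x (.inl (c, w))
      = adjLin H (block x c) w + (∑ v, x v - ∑ w', block x c w') := by
  rw [adjLin_apply, Fintype.sum_sum_type, Fintype.sum_prod_type, Fintype.sum_eq_add_sum_compl c,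
    sum_eq_sum_block_add x, Fintype.sum_eq_add_sum_compl c]
  rw [Finset.sum_congr rfl (g := fun c' ↦ ∑ w', block x c' w') fun c' hc' ↦ by
    simp_all [block, eq_comm]]
  simp [block, adjLin_apply]
  ring

lemma adjLin_nrLevel_true_inr (x : (Fin a × V) ⊕ Fin bb → ℝ) (i : Fin bb) :
    adjLin (nrLevel a bb H true) x (.inr i) = ∑ v, x v - x (.inr i) := by
  rw [adjLin_apply, Fintype.sum_sum_type, sum_eq_sum_block_add x, Fintype.sum_prod_type]
  simp [block, Finset.sum_ite, Finset.filter_ne, Finset.sum_erase_eq_sub, add_sub_assoc]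

end Levels

section Complete

variable {b : ℕ}

lemma adjLin_top (x : Fin b → ℝ) (w : Fin b) : adjLin ⊤ x w = ∑ u, x u - x w := by
  simp [adjLin_apply, Finset.sum_ite, Finset.filter_ne, Finset.sum_erase_eq_sub]

lemma shift_eq_zero_and_eq_average_of_adjLin_top (hb : 0 < b) {x : Fin b → ℝ} {t : ℝ}
    (hx : ∀ w, adjLin ⊤ x w + t = (b - 1) * x w) : t = 0 ∧ ∀ w, x w = (∑ u, x u) / b := by
  have hb' : (b : ℝ) ≠ 0 := by positivity
  have hxw : ∀ w, x w = (∑ u, x u + t) / b := fun w ↦ by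
    rw [eq_div_iff hb']; linarith [hx w, adjLin_top x w]
  have ht : t = 0 := by
    have hsum := Finset.sum_congr rfl fun w (_ : w ∈ Finset.univ) ↦ hxw w
    rw [Finset.sum_const, Finset.card_univ, Fintype.card_fin, nsmul_eq_mul,
      mul_div_cancel₀ _ hb'] at hsum
    linarith
  exact ⟨ht, by simpa [ht] using hxw⟩

lemma hasShiftRatio_top (hb : 0 < b) : HasShiftRatio (⊤ : SimpleGraph (Fin b)) (b - 1) 0 :=
  fun _ _ hx ↦ by simpa using (shift_eq_zero_and_eq_average_of_adjLin_top hb hx).1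

end Complete

section LevelSpectra

variable {a bb : ℕ} {V : Type} [Fintype V] {H : SimpleGraph V} {μ κ : ℝ}

lemma HasShiftRatio.nrLevel_false (hH : HasShiftRatio H μ κ) (ha : 0 < a) :
    HasShiftRatio (nrLevel a 0 H false) μ (κ / a) := by
  intro x t hx
  have hblock : ∀ c, t = κ * ∑ w, block x c w := fun c ↦
    hH _ t fun w ↦ by rw [← adjLin_nrLevel_false_inl]; exact hx (.inl (c, w))
  have hsum : (a : ℝ) * t = κ * ∑ v, x v := by
    rw [sum_eq_sum_block_add, Fin.sum_univ_zero, add_zero, Finset.mul_sum, ← Finset.sum_congr rfl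
      fun c _ ↦ hblock c, Finset.sum_const, Finset.card_univ, Fintype.card_fin, nsmul_eq_mul]
  field_simp
  linarith

lemma HasShiftRatio.nrLevel_true (hH : HasShiftRatio H μ κ) (hκ : κ ∈ Ioc (-1) 0)
    (hμ : -1 < μ) (ha : 0 < a) (hbb : 0 < bb) :
    ∃ κ' ∈ Ioo (-1) 0, HasShiftRatio (nrLevel a bb H true) μ κ' := by
  obtain ⟨hκ₁, hκ₂⟩ := hκ
  have hκ' : 0 < 1 + κ := by linarith
  have hμ' : 0 < μ + 1 := by linarith
  set ρ : ℝ := a / (1 + κ) + bb / (μ + 1)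
  have hρ : 1 < ρ := by
    have h₁ : 1 ≤ (a : ℝ) / (1 + κ) := by
      have : (1 : ℝ) ≤ a := by exact_mod_cast ha
      rw [le_div_iff₀ hκ']
      linarith
    have h₂ : 0 < (bb : ℝ) / (μ + 1) := by positivity
    linarith
  refine ⟨ρ⁻¹ - 1, ⟨by linarith [inv_pos.mpr (by linarith : (0 : ℝ) < ρ)],
    by linarith [inv_lt_one_of_one_lt₀ hρ]⟩, fun x t hx ↦ ?_⟩
  have hsingle : ∀ i, x (.inr i) = (∑ v, x v + t) / (μ + 1) := fun i ↦ by
    rw [eq_div_iff hμ'.ne']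
    linarith [hx (.inr i), adjLin_nrLevel_true_inr H x i]
  have hblock : ∀ c, ∑ w, block x c w = (∑ v, x v + t) / (1 + κ) := fun c ↦ by
    have := hH (block x c) (∑ v, x v - ∑ w, block x c w + t) fun w ↦ by
      change _ = μ * x (.inl (c, w))
      linarith [hx (.inl (c, w)), adjLin_nrLevel_true_inl H x c w]
    rw [eq_div_iff hκ'.ne']
    linarith
  have hT : ∑ v, x v = ρ * (∑ v, x v + t) := by
    calc ∑ v, x v = ∑ c, ∑ w, block x c w + ∑ i, x (.inr i) := sum_eq_sum_block_add x
      _ = ρ * (∑ v, x v + t) := by simp only [hblock, hsingle]; simp [ρ]; ring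
  field_simp
  linarith

lemma finrank_eq_mul_of_mem_iff_block {P : Submodule ℝ ((Fin a × V) ⊕ Fin bb → ℝ)}
    {W : Submodule ℝ (V → ℝ)}
    (hP : ∀ x, x ∈ P ↔ (∀ c, block x c ∈ W) ∧ ∀ i, x (.inr i) = 0) :
    finrank ℝ P = a * finrank ℝ W := by
  let e : P ≃ₗ[ℝ] (Fin a → W) :=
    { toFun := fun x c ↦ ⟨block x.1 c, ((hP x.1).1 x.2).1 c⟩
      invFun := fun y ↦ ⟨Sum.elim (fun p ↦ (y p.1 : V → ℝ) p.2) 0,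
        (hP _).2 ⟨fun c ↦ (y c).2, fun _ ↦ rfl⟩⟩
      map_add' := fun _ _ ↦ rfl
      map_smul' := fun _ _ ↦ rfl
      left_inv := fun x ↦ by
        ext (p | i)
        · rfl
        · exact (((hP x.1).1 x.2).2 i).symm
      right_inv := fun _ ↦ rfl }
  rw [e.finrank_eq, finrank_pi_fintype, Finset.sum_const, Finset.card_univ, Fintype.card_fin,
    smul_eq_mul]

lemma HasShiftRatio.finrank_zeroSumEigenspace_nrLevel_false (hH : HasShiftRatio H μ κ)
    (hκ : κ ≠ 0) :
    finrank ℝ (zeroSumEigenspace (nrLevel a 0 H false) μ)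
      = a * finrank ℝ (zeroSumEigenspace H μ) := by
  refine finrank_eq_mul_of_mem_iff_block fun x ↦ ?_
  simp only [mem_zeroSumEigenspace, IsEmpty.forall_iff, and_true]
  constructor
  · rintro ⟨heig, -⟩ c
    have hc : ∀ w, adjLin H (block x c) w = μ * block x c w := fun w ↦ by
      rw [← adjLin_nrLevel_false_inl]; exact heig (.inl (c, w))
    refine ⟨hc, ?_⟩
    have := hH (block x c) 0 fun w ↦ by simpa using hc w
    exact (mul_eq_zero.mp this.symm).resolve_left hκ
  · refine fun hblock ↦ ⟨?_, ?_⟩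
    · rintro (⟨c, w⟩ | i)
      · rw [adjLin_nrLevel_false_inl]; exact (hblock c).1 w
      · exact i.elim0
    · rw [sum_eq_sum_block_add]
      simp [(hblock _).2]

lemma HasShiftRatio.finrank_zeroSumEigenspace_nrLevel_true (hH : HasShiftRatio H μ κ)
    (hκ : κ ≠ -1) (hμ : μ ≠ -1) :
    finrank ℝ (zeroSumEigenspace (nrLevel a bb H true) μ)
      = a * finrank ℝ (zeroSumEigenspace H μ) := by
  refine finrank_eq_mul_of_mem_iff_block fun x ↦ ?_
  simp only [mem_zeroSumEigenspace]
  constructor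
  · rintro ⟨heig, hsum⟩
    have hsingle : ∀ i, x (.inr i) = 0 := fun i ↦ by
      have h := heig (.inr i)
      rw [adjLin_nrLevel_true_inr, hsum] at h
      have : (μ + 1) * x (.inr i) = 0 := by linarith
      exact (mul_eq_zero.mp this).resolve_left (by contrapose! hμ; linarith)
    have hshift : ∀ c w, adjLin H (block x c) w + -∑ w', block x c w' = μ * block x c w :=
      fun c w ↦ by
        have h := heig (.inl (c, w))
        rw [adjLin_nrLevel_true_inl, hsum] at h
        change _ = μ * x (.inl (c, w))
        linarith
    have hblock : ∀ c, ∑ w, block x c w = 0 := fun c ↦ by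
      have := hH _ _ (hshift c)
      have : (1 + κ) * ∑ w, block x c w = 0 := by linarith
      exact (mul_eq_zero.mp this).resolve_left (by contrapose! hκ; linarith)
    exact ⟨fun c ↦ ⟨fun w ↦ by simpa [hblock c] using hshift c w, hblock c⟩, hsingle⟩
  · rintro ⟨hblock, hsingle⟩
    have hsum : ∑ v, x v = 0 := by
      rw [sum_eq_sum_block_add]
      simp [(hblock _).2, hsingle]
    refine ⟨?_, hsum⟩
    rintro (⟨c, w⟩ | i)
    · rw [adjLin_nrLevel_true_inl, hsum, (hblock c).2, (hblock c).1 w]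
      simp [block]
    · simp [adjLin_nrLevel_true_inr, hsum, hsingle]

lemma zeroSumEigenspace_nrLevel_false_top {b : ℕ} (hb : 0 < b) :
    zeroSumEigenspace (nrLevel a 0 (⊤ : SimpleGraph (Fin b)) false) (b - 1)
      = (LinearMap.ker (Fintype.linearCombination ℝ fun _ : Fin a ↦ (1 : ℝ))).map
          (LinearMap.funLeft ℝ ℝ (Sum.elim Prod.fst Fin.elim0)) := by
  ext x
  simp only [mem_zeroSumEigenspace, Submodule.mem_map, LinearMap.mem_ker,
    Fintype.linearCombination_apply, smul_eq_mul, mul_one]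
  constructor
  · rintro ⟨heig, hsum⟩
    have hconst : ∀ c w, x (.inl (c, w)) = (∑ w', block x c w') / b := fun c ↦
      (shift_eq_zero_and_eq_average_of_adjLin_top hb (x := block x c) (t := 0) fun w ↦ by
        rw [add_zero, ← adjLin_nrLevel_false_inl]; exact heig (.inl (c, w))).2
    refine ⟨fun c ↦ (∑ w, block x c w) / b, ?_, ?_⟩
    · rw [sum_eq_sum_block_add] at hsum
      simp [← Finset.sum_div]
      exact .inl (by simpa using hsum)
    · ext (⟨c, w⟩ | i)
      · exact (hconst c w).symm
      · exact i.elim0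
  · rintro ⟨y, hy, rfl⟩
    refine ⟨?_, ?_⟩
    · rintro (⟨c, w⟩ | i)
      · rw [adjLin_nrLevel_false_inl, adjLin_top]
        simp [block]
        ring
      · exact i.elim0
    · rw [sum_eq_sum_block_add]
      simp [block, ← Finset.mul_sum, hy]

lemma finrank_zeroSumEigenspace_nrLevel_false_top {b : ℕ} (hb : 0 < b) (ha : 0 < a) :
    finrank ℝ (zeroSumEigenspace (nrLevel a 0 (⊤ : SimpleGraph (Fin b)) false) (b - 1))
      = a - 1 := by
  have hs : (Fintype.linearCombination ℝ fun _ : Fin a ↦ (1 : ℝ)) ≠ 0 := fun h ↦ by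
    simpa [Fintype.linearCombination_apply] using LinearMap.congr_fun h (Pi.single ⟨0, ha⟩ 1)
  have hφ := LinearMap.funLeft_injective_of_surjective ℝ ℝ
    (Sum.elim Prod.fst Fin.elim0 : (Fin a × Fin b) ⊕ Fin 0 → Fin a)
    fun c ↦ ⟨.inl (c, ⟨0, hb⟩), rfl⟩
  have := Dual.finrank_ker_add_one_of_ne_zero hs
  rw [zeroSumEigenspace_nrLevel_false_top hb,
    ← (Submodule.equivMapOfInjective _ hφ _).finrank_eq, finrank_fin_fun] at *
  omega

end LevelSpectra

/-- The conditions on the levels above the bottom level `(al, 0)`: `j` says whether the current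
level is a join, and the bottom level must be a disjoint union. -/
def IsAlternating (b : ℕ) : List (ℕ × ℕ) → Bool → Prop
  | [], j => j = false
  | p :: l, j => 0 < p.1 ∧ (if j then b ≤ p.2 else p.2 = 0) ∧ IsAlternating b l (!j)

lemma isAlternating_of_getElem {b : ℕ} :
    ∀ (l : List (ℕ × ℕ)) (j : Bool), (∀ p ∈ l, 0 < p.1) →
      (∀ i (h : i < l.length), (Even i ↔ j) → b ≤ l[i].2) →
      (∀ i (h : i < l.length), ¬(Even i ↔ j) → l[i].2 = 0) →
      (Even l.length ↔ j = false) → IsAlternating b l j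
  | [], j, _, _, _, hlen => by simpa [IsAlternating] using hlen
  | p :: l, j, hpos, hjoin, hunion, hlen => by
    refine ⟨hpos p (by simp), ?_,
      isAlternating_of_getElem l (!j) (fun q hq ↦ hpos q (by simp [hq]))
        (fun i h hi ↦ hjoin (i + 1) (by simpa) ?_) (fun i h hi ↦ hunion (i + 1) (by simpa) ?_)
        ?_⟩
    · cases j
      · exact hunion 0 (by simp) (by simp)
      · exact hjoin 0 (by simp) (by simp)
    all_goals cases j <;> simp_all [Nat.even_add_one]

theorem exists_hasShiftRatio_and_finrank_zeroSumEigenspace {b al : ℕ} (hb : 0 < b)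
    (hal : 0 < al) : ∀ (l : List (ℕ × ℕ)) (j : Bool), IsAlternating b l j →
      ∃ κ ∈ Ioc (-1 : ℝ) 0, (j → κ ≠ 0) ∧
        HasShiftRatio (nrCotreeGraph (l ++ [(al, 0)]) b j) (b - 1) κ ∧
        finrank ℝ (zeroSumEigenspace (nrCotreeGraph (l ++ [(al, 0)]) b j) (b - 1))
          = (l.map Prod.fst).prod * (al - 1)
  | [], j, hj => by
    obtain rfl : j = false := hj
    have hG := (hasShiftRatio_top hb).nrLevel_false hal
    rw [zero_div] at hG
    exact ⟨0, by norm_num, by simp, hG,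
      (finrank_zeroSumEigenspace_nrLevel_false_top hb hal).trans (by simp)⟩
  | (a, bb) :: l, false, ⟨ha, hbb, hl⟩ => by
    obtain ⟨κ, ⟨hκ₁, hκ₂⟩, hκ, hH, hrank⟩ :=
      exists_hasShiftRatio_and_finrank_zeroSumEigenspace hb hal l true hl
    obtain rfl : bb = 0 := hbb
    have ha' : (1 : ℝ) ≤ a := by exact_mod_cast ha
    refine ⟨κ / a, ⟨?_, div_nonpos_of_nonpos_of_nonneg hκ₂ (by positivity)⟩, by simp,
      hH.nrLevel_false ha, ?_⟩
    · rw [lt_div_iff₀ (by positivity)]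
      linarith
    · exact (hH.finrank_zeroSumEigenspace_nrLevel_false (hκ rfl)).trans
        (by simp [hrank, mul_assoc])
  | (a, bb) :: l, true, ⟨ha, hbb, hl⟩ => by
    obtain ⟨κ, hκ, -, hH, hrank⟩ :=
      exists_hasShiftRatio_and_finrank_zeroSumEigenspace hb hal l false hl
    have hb' : (1 : ℝ) ≤ b := by exact_mod_cast hb
    obtain ⟨κ', ⟨hκ'₁, hκ'₂⟩, hG⟩ :=
      hH.nrLevel_true (bb := bb) hκ (by linarith) ha (by simp at hbb; omega)
    refine ⟨κ', ⟨hκ'₁, hκ'₂.le⟩, fun _ ↦ hκ'₂.ne, hG, ?_⟩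
    exact (hH.finrank_zeroSumEigenspace_nrLevel_true hκ.1.ne' (by linarith)).trans
      (by simp [hrank, mul_assoc])

theorem multiplicity_b_sub_one_nonregular_balanced_cotree_general
    (r : ℕ) (hodd : Odd r)
    (ps : List (ℕ × ℕ)) (al bl : ℕ)
    (hlen : (ps ++ [(al, bl)]).length = r - 1)
    (b : ℕ) (hb : 2 ≤ b)
    (hposa : ∀ q ∈ ps ++ [(al, bl)], 0 < q.1)
    (hbeven : ∀ (i : ℕ) (h : i < (ps ++ [(al, bl)]).length),
      Even (i + 1) → ((ps ++ [(al, bl)]).get ⟨i, h⟩).2 = 0)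
    (hbodd : ∀ (i : ℕ) (h : i < (ps ++ [(al, bl)]).length),
      Odd (i + 1) → b ≤ ((ps ++ [(al, bl)]).get ⟨i, h⟩).2) :
    eigMult (nrCotreeGraph (ps ++ [(al, bl)]) b true) ((b : ℝ) - 1)
      = (ps.map Prod.fst).prod * (al - 1) := by
  obtain ⟨k, rfl⟩ := hodd
  have hps : ps.length + 2 = 2 * k + 1 := by simp at hlen; omega
  obtain rfl : bl = 0 := by simpa using hbeven ps.length (by simp) ⟨k, by omega⟩
  have halt : IsAlternating b ps true := by
    refine isAlternating_of_getElem ps true (fun p hp ↦ hposa p (by simp [hp]))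
      (fun i h hi ↦ ?_) (fun i h hi ↦ ?_) (by simp [Nat.even_iff]; omega)
    · simpa [List.getElem_append_left h] using
        hbodd i (by simp; omega) (by simpa [Nat.odd_add_one] using hi)
    · simpa [List.getElem_append_left h] using
        hbeven i (by simp; omega) (by simpa [Nat.even_add_one] using hi)
  obtain ⟨κ, -, hκ, hG, hrank⟩ := exists_hasShiftRatio_and_finrank_zeroSumEigenspace
    (by omega) (hposa (al, 0) (by simp)) ps true halt
  rw [eigMult_eq_finrank_eigenspace, hG.eigenspace_eq_zeroSumEigenspace (hκ rfl), hrank]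

/-- Let `r ≥ 2` be odd and let `G` be the cograph with non-regular balanced cotree
`T_G(a_1, …, a_{r-1}, 0 | b_1, …, b_{r-1}, b)`, where the list of pairs
`[(a_1, b_1), …, (a_{r-1}, b_{r-1})] = ps ++ [(al, bl)]` has positive first components,
`b_i = 0` for every even index `i ≤ r - 1`, `b_i ≥ b` for every odd index `i ≤ r - 1`, and
`b = b_r ≥ 2`.  Then `b - 1` is an eigenvalue of `G` with multiplicity
`m(b - 1) = a_1 a_2 ⋯ a_{r-2} (a_{r-1} - 1)`. -/
theorem multiplicity_b_sub_one_nonregular_balanced_cotree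
    (r : ℕ) (hr : 2 ≤ r) (hodd : Odd r)
    (ps : List (ℕ × ℕ)) (al bl : ℕ)
    (hlen : (ps ++ [(al, bl)]).length = r - 1)
    (b : ℕ) (hb : 2 ≤ b)
    (hposa : ∀ q ∈ ps ++ [(al, bl)], 0 < q.1)
    (hbeven : ∀ (i : ℕ) (h : i < (ps ++ [(al, bl)]).length),
      Even (i + 1) → ((ps ++ [(al, bl)]).get ⟨i, h⟩).2 = 0)
    (hbodd : ∀ (i : ℕ) (h : i < (ps ++ [(al, bl)]).length),
      Odd (i + 1) → b ≤ ((ps ++ [(al, bl)]).get ⟨i, h⟩).2) :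
    eigMult (nrCotreeGraph (ps ++ [(al, bl)]) b true) ((b : ℝ) - 1)
      = (ps.map Prod.fst).prod * (al - 1) :=
  multiplicity_b_sub_one_nonregular_balanced_cotree_general r hodd ps al bl hlen b hb hposa hbeven
    hbodd
end
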